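/- Suppose 𝒰₀ contains no α-optimal vector. Then there exists a constant C > 0 such that for all integers T ≥ 1: max_{x∈𝒰*} α^⊤x − sup_{x∈𝒱_T} α^⊤x ≥ C/T. -/

import Mathlib

open MeasureTheory

noncomputable section

variable {n : ℕ}

/-- The cube `[0, v̄]ⁿ` of possible report/utility profiles. -/
def cube (n : ℕ) (vbar : ℝ) : Set (Fin n → ℝ) := {v | ∀ i, v i ∈ Set.Icc (0 : ℝ) vbar}

/-- The simplex `Δₙ` (with a do-nothing option). -/
def simplexSet (n : ℕ) : Set (Fin n → ℝ) := {y | (∀ i, 0 ≤ y i) ∧ ∑ i, y i ≤ 1}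

/-- An allocation function: measurable, valued in the simplex on the cube. -/
def IsAllocation (vbar : ℝ) (p : (Fin n → ℝ) → (Fin n → ℝ)) : Prop :=
  Measurable p ∧ ∀ v ∈ cube n vbar, p v ∈ simplexSet n

/-- Interim value for agent `i` reporting `b`: the expectation of the `i`-th coordinate of `g`
over the other agents' utilities. -/
def interimFn (D : Fin n → Measure ℝ) (g : (Fin n → ℝ) → (Fin n → ℝ)) (i : Fin n) (b : ℝ) : ℝ :=
  ∫ v, g (Function.update v i b) i ∂(Measure.pi D)

/-- Realized utility vector of an allocation function. -/
def realized (D : Fin n → Measure ℝ) (p : (Fin n → ℝ) → (Fin n → ℝ)) : Fin n → ℝ :=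
  fun i => ∫ v, v i * p v i ∂(Measure.pi D)

/-- The full-information achievable set `𝒰*`. -/
def Ustar (D : Fin n → Measure ℝ) (vbar : ℝ) : Set (Fin n → ℝ) :=
  {U | ∃ p, IsAllocation vbar p ∧ U = realized D p}

/-- One-shot incentive compatibility. -/
def OneShotIC (D : Fin n → Measure ℝ) (vbar : ℝ) (p : (Fin n → ℝ) → (Fin n → ℝ)) : Prop :=
  ∀ i, ∀ a ∈ Set.Icc (0 : ℝ) vbar, ∀ b ∈ Set.Icc (0 : ℝ) vbar,
    a * interimFn D p i b ≤ a * interimFn D p i a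

/-- The one-shot achievable set `𝒰₀`. -/
def U0set (D : Fin n → Measure ℝ) (vbar : ℝ) : Set (Fin n → ℝ) :=
  {U | ∃ p, IsAllocation vbar p ∧ OneShotIC D vbar p ∧ U = realized D p}

/-- Validity of a promised-utility mechanism on a region `R`. -/
def PromisedOK (D : Fin n → Measure ℝ) (vbar γ : ℝ) (R : Set (Fin n → ℝ))
    (pf Wf : (Fin n → ℝ) → (Fin n → ℝ) → (Fin n → ℝ)) : Prop :=
  (∀ U ∈ R, IsAllocation vbar (pf U)) ∧
  (∀ U ∈ R, Measurable (Wf U)) ∧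
  (∀ U ∈ R, ∀ i, U i =
    ∫ v, ((1 - γ) * (v i * pf U v i) + γ * Wf U v i) ∂(Measure.pi D)) ∧
  (∀ U ∈ R, ∀ v ∈ cube n vbar, Wf U v ∈ R) ∧
  (∀ U ∈ R, ∀ i, ∀ a ∈ Set.Icc (0 : ℝ) vbar, ∀ b ∈ Set.Icc (0 : ℝ) vbar,
    (1 - γ) * a * interimFn D (pf U) i b + γ * interimFn D (Wf U) i b ≤
      (1 - γ) * a * interimFn D (pf U) i a + γ * interimFn D (Wf U) i a)

/-- The `γ`-discounted achievable set `𝒰_γ`. -/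
def Ugamma (D : Fin n → Measure ℝ) (vbar γ : ℝ) : Set (Fin n → ℝ) :=
  {U₀ | (∀ i, 0 ≤ U₀ i) ∧ ∃ R, R ⊆ Ustar D vbar ∧ U₀ ∈ R ∧
    ∃ pf Wf, PromisedOK D vbar γ R pf Wf}

/-- The finite-horizon achievable sets `𝒱_T` (with junk value `∅` at `T = 0`). -/
def Vset (D : Fin n → Measure ℝ) (vbar : ℝ) : ℕ → Set (Fin n → ℝ)
  | 0 => ∅
  | 1 => U0set D vbar
  | (T + 2) =>
    {U | (∀ i, 0 ≤ U i) ∧ ∃ p W : (Fin n → ℝ) → (Fin n → ℝ), IsAllocation vbar p ∧ Measurable W ∧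
      (∀ i, U i = ∫ v, ((1 - (1 - 1 / ((T : ℝ) + 2))) * (v i * p v i)
          + (1 - 1 / ((T : ℝ) + 2)) * W v i) ∂(Measure.pi D)) ∧
      (∀ v ∈ cube n vbar, W v ∈ Vset D vbar (T + 1)) ∧
      (∀ i, ∀ a ∈ Set.Icc (0 : ℝ) vbar, ∀ b ∈ Set.Icc (0 : ℝ) vbar,
        (1 - (1 - 1 / ((T : ℝ) + 2))) * a * interimFn D p i b
            + (1 - 1 / ((T : ℝ) + 2)) * interimFn D W i b ≤
          (1 - (1 - 1 / ((T : ℝ) + 2))) * a * interimFn D p i a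
            + (1 - 1 / ((T : ℝ) + 2)) * interimFn D W i a)}

/-- `sup_{x ∈ S} α ⬝ x`. -/
def supVal (α : Fin n → ℝ) (S : Set (Fin n → ℝ)) : ℝ :=
  sSup ((fun x => ∑ i, α i * x i) '' S)

/-- `Z = maxᵢ αᵢ uᵢ`. -/
def Zmax (α v : Fin n → ℝ) : ℝ := ⨆ i, α i * v i

/-- `Zᵢ = max_{j ≠ i} αⱼ uⱼ`. -/
def Zminus (α : Fin n → ℝ) (i : Fin n) (v : Fin n → ℝ) : ℝ :=
  ⨆ j ∈ ({i}ᶜ : Set (Fin n)), α j * v j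

/-- `Z_B = max_{j ∈ B} αⱼ uⱼ`. -/
def ZB (α : Fin n → ℝ) (B : Finset (Fin n)) (v : Fin n → ℝ) : ℝ := ⨆ j ∈ B, α j * v j

/-- `max_{x ∈ 𝒰*} α ⬝ x = 𝔼[maxᵢ αᵢ uᵢ]`. -/
def maxUstar (D : Fin n → Measure ℝ) (α : Fin n → ℝ) : ℝ :=
  ∫ v, Zmax α v ∂(Measure.pi D)

/-- Euclidean distance on `Fin n → ℝ`. -/
def euclDist (x y : Fin n → ℝ) : ℝ := Real.sqrt (∑ i, (x i - y i) ^ 2)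

/-- Euclidean norm on `Fin n → ℝ`. -/
def euclNorm (x : Fin n → ℝ) : ℝ := Real.sqrt (∑ i, x i ^ 2)

/-- Closed Euclidean ball. -/
def euclBall (x : Fin n → ℝ) (r : ℝ) : Set (Fin n → ℝ) := {y | euclDist x y ≤ r}

/-- Open Euclidean ball. -/
def euclBallOpen (x : Fin n → ℝ) (r : ℝ) : Set (Fin n → ℝ) := {y | euclDist x y < r}

/-- The set `I` of non-superfluous agents for direction `α`. -/
def Iset (D : Fin n → Measure ℝ) (α : Fin n → ℝ) : Set (Fin n) :=
  {i | (∀ j, j ≠ i → 0 < Measure.pi D {v | α j * v j < α i * v i}) ∧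
    ¬∃ m M : ℝ, 0 ≤ m ∧ m ≤ M ∧
      Measure.pi D {v | α i * v i ∈ Set.Icc m M ∪ {0}} = 1 ∧
      ∀ j, j ≠ i → Measure.pi D {v | α j * v j ∈ Set.Ioo m M} = 0}

/-- The set `Ĩ = I ∪ {i : ℙ(αᵢuᵢ = Zᵢ > 0) > 0}`. -/
def Itilde (D : Fin n → Measure ℝ) (α : Fin n → ℝ) : Set (Fin n) :=
  Iset D α ∪ {i | 0 < Measure.pi D {v | α i * v i = Zminus α i v ∧ 0 < Zminus α i v}}

end


section AuxNoFaster

open MeasureTheory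

variable {n : ℕ} {vbar : ℝ} {D : Fin n → Measure ℝ}

lemma Vset_one (D : Fin n → Measure ℝ) (vbar : ℝ) : Vset D vbar 1 = U0set D vbar := rfl

lemma ae_cube [∀ i, IsProbabilityMeasure (D i)]
    (hsupp : ∀ i, D i (Set.Icc (0 : ℝ) vbar)ᶜ = 0) :
    ∀ᵐ v ∂(Measure.pi D), v ∈ cube n vbar := by
  have hDi : ∀ i, D i (Set.Icc (0:ℝ) vbar) = 1 := fun i =>
    (prob_compl_eq_zero_iff measurableSet_Icc).mp (hsupp i)
  have hcube : cube n vbar = Set.pi Set.univ (fun _ : Fin n => Set.Icc (0:ℝ) vbar) := by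
    ext v
    simp only [cube, Set.mem_setOf_eq, Set.mem_univ_pi]
  have hm : MeasurableSet (cube n vbar) := by
    rw [hcube]; exact MeasurableSet.univ_pi fun i => measurableSet_Icc
  have h1 : Measure.pi D (cube n vbar) = 1 := by
    rw [hcube, Measure.pi_pi]; simp [hDi]
  rw [ae_iff]
  have h2 : {v : Fin n → ℝ | ¬ v ∈ cube n vbar} = (cube n vbar)ᶜ := rfl
  rw [h2, prob_compl_eq_zero_iff hm]
  exact h1

lemma integ_bdd [∀ i, IsProbabilityMeasure (D i)]
    (hsupp : ∀ i, D i (Set.Icc (0 : ℝ) vbar)ᶜ = 0) {f : (Fin n → ℝ) → ℝ}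
    (hf : Measurable f) {M : ℝ} (hM : ∀ v ∈ cube n vbar, |f v| ≤ M) :
    Integrable f (Measure.pi D) :=
  (integrable_const M).mono' hf.aestronglyMeasurable
    ((ae_cube hsupp).mono fun v hv => by simpa [Real.norm_eq_abs] using hM v hv)

lemma simplex_coord {y : Fin n → ℝ} (hy : y ∈ simplexSet n) (i : Fin n) :
    0 ≤ y i ∧ y i ≤ 1 :=
  ⟨hy.1 i, le_trans (Finset.single_le_sum (fun j _ => hy.1 j) (Finset.mem_univ i)) hy.2⟩

lemma zmax_meas (hn : 0 < n) (α : Fin n → ℝ) : Measurable (Zmax α) := by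
  have : Nonempty (Fin n) := ⟨⟨0, hn⟩⟩
  have h : Zmax α = Finset.univ.sup' Finset.univ_nonempty
      (fun i (v : Fin n → ℝ) => α i * v i) := by
    funext v
    rw [Finset.sup'_apply, Finset.sup'_univ_eq_ciSup]
    rfl
  rw [h]
  exact Finset.measurable_sup' _ fun i _ => by fun_prop

lemma zmax_nonneg (hn : 0 < n) {α v : Fin n → ℝ} (hα : ∀ i, 0 ≤ α i)
    (hv : v ∈ cube n vbar) : 0 ≤ Zmax α v := by
  have : Nonempty (Fin n) := ⟨⟨0, hn⟩⟩
  rw [Zmax]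
  exact le_trans (mul_nonneg (hα ⟨0, hn⟩) (hv ⟨0, hn⟩).1)
    (le_ciSup (f := fun i => α i * v i) (Set.Finite.bddAbove (Set.finite_range _)) ⟨0, hn⟩)

lemma zmax_le (hn : 0 < n) (hvb : 0 ≤ vbar) {α v : Fin n → ℝ} (hα : ∀ i, 0 ≤ α i)
    (hv : v ∈ cube n vbar) : Zmax α v ≤ (∑ i, α i) * vbar := by
  have : Nonempty (Fin n) := ⟨⟨0, hn⟩⟩
  rw [Zmax]
  refine ciSup_le fun i => ?_
  calc α i * v i ≤ α i * vbar := mul_le_mul_of_nonneg_left (hv i).2 (hα i)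
    _ ≤ (∑ j, α j) * vbar := mul_le_mul_of_nonneg_right
        (Finset.single_le_sum (fun j _ => hα j) (Finset.mem_univ i)) hvb

lemma sum_le_zmax (hn : 0 < n) {α : Fin n → ℝ} (hα : ∀ i, 0 ≤ α i) {v y : Fin n → ℝ}
    (hv : v ∈ cube n vbar) (hy : y ∈ simplexSet n) :
    ∑ i, α i * (v i * y i) ≤ Zmax α v := by
  have hne : Nonempty (Fin n) := ⟨⟨0, hn⟩⟩
  have hle : ∀ i, α i * v i ≤ Zmax α v := fun i => by
    rw [Zmax]
    exact le_ciSup (f := fun j => α j * v j) (Set.Finite.bddAbove (Set.finite_range _)) i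
  have h1 : ∑ i, α i * (v i * y i) ≤ ∑ i, Zmax α v * y i := by
    refine Finset.sum_le_sum fun i _ => ?_
    rw [← mul_assoc]
    exact mul_le_mul_of_nonneg_right (hle i) (hy.1 i)
  refine h1.trans ?_
  rw [← Finset.mul_sum]
  calc Zmax α v * ∑ i, y i ≤ Zmax α v * 1 :=
        mul_le_mul_of_nonneg_left hy.2 (zmax_nonneg hn hα hv)
    _ = Zmax α v := mul_one _

lemma vset_box [∀ i, IsProbabilityMeasure (D i)] (hvb : 0 < vbar)
    (hsupp : ∀ i, D i (Set.Icc (0 : ℝ) vbar)ᶜ = 0) :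
    ∀ T, ∀ U ∈ Vset D vbar T, ∀ i, 0 ≤ U i ∧ U i ≤ vbar := by
  intro T
  induction T using Nat.strong_induction_on with
  | _ T ih =>
    rcases T with _ | _ | S
    · intro U hU; exact absurd hU (by simp [Vset])
    · rintro U ⟨p, hp, _, rfl⟩ i
      have hmeas : Measurable fun v : Fin n → ℝ => v i * p v i :=
        (measurable_pi_apply i).mul ((measurable_pi_apply i).comp hp.1)
      have hbd : ∀ v ∈ cube n vbar, 0 ≤ v i * p v i ∧ v i * p v i ≤ vbar := by
        intro v hv
        have h1 := hv i
        have h2 := simplex_coord (hp.2 v hv) i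
        refine ⟨mul_nonneg h1.1 h2.1, ?_⟩
        calc v i * p v i ≤ vbar * 1 := mul_le_mul h1.2 h2.2 h2.1 hvb.le
          _ = vbar := mul_one _
      have hint : Integrable (fun v => v i * p v i) (Measure.pi D) :=
        integ_bdd hsupp hmeas (M := vbar) fun v hv =>
          abs_le.mpr ⟨by linarith [(hbd v hv).1, hvb.le], (hbd v hv).2⟩
      constructor
      · exact integral_nonneg_of_ae ((ae_cube hsupp).mono fun v hv => (hbd v hv).1)
      · have h3 := integral_mono_ae hint (integrable_const vbar)
          ((ae_cube hsupp).mono fun v hv => (hbd v hv).2)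
        simpa [realized] using h3
    · rintro U ⟨hpos, p, W, hp, hW, hUeq, hWmem, -⟩ i
      refine ⟨hpos i, ?_⟩
      set c : ℝ := 1 / ((S:ℝ) + 2) with hc
      have hS2 : (0:ℝ) < (S:ℝ) + 2 := by positivity
      have hc0 : 0 ≤ c := by positivity
      have hc1 : c ≤ 1 := by
        rw [hc, div_le_one hS2]; linarith [show (0:ℝ) ≤ (S:ℝ) from Nat.cast_nonneg S]
      have hmeas : Measurable fun v : Fin n → ℝ =>
          (1 - (1 - c)) * (v i * p v i) + (1 - c) * W v i :=
        (((measurable_pi_apply i).mul ((measurable_pi_apply i).comp hp.1)).const_mul _).add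
          (((measurable_pi_apply i).comp hW).const_mul _)
      have hbd : ∀ v ∈ cube n vbar,
          0 ≤ (1 - (1 - c)) * (v i * p v i) + (1 - c) * W v i ∧
          (1 - (1 - c)) * (v i * p v i) + (1 - c) * W v i ≤ vbar := by
        intro v hv
        have h1 := hv i
        have h2 := simplex_coord (hp.2 v hv) i
        have h3 : 0 ≤ v i * p v i ∧ v i * p v i ≤ vbar := by
          refine ⟨mul_nonneg h1.1 h2.1, ?_⟩
          calc v i * p v i ≤ vbar * 1 := mul_le_mul h1.2 h2.2 h2.1 hvb.le
            _ = vbar := mul_one _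
        have h4 := ih (S + 1) (by omega) (W v) (hWmem v hv) i
        constructor
        · have e1 : (0:ℝ) ≤ (1 - (1 - c)) * (v i * p v i) :=
            mul_nonneg (by linarith) h3.1
          have e2 : (0:ℝ) ≤ (1 - c) * W v i := mul_nonneg (by linarith) h4.1
          linarith
        · have e1 : (1 - (1 - c)) * (v i * p v i) ≤ (1 - (1 - c)) * vbar :=
            mul_le_mul_of_nonneg_left h3.2 (by linarith)
          have e2 : (1 - c) * W v i ≤ (1 - c) * vbar :=
            mul_le_mul_of_nonneg_left h4.2 (by linarith)
          nlinarith
      have hint : Integrable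
          (fun v => (1 - (1 - c)) * (v i * p v i) + (1 - c) * W v i) (Measure.pi D) :=
        integ_bdd hsupp hmeas (M := vbar) fun v hv =>
          abs_le.mpr ⟨by linarith [(hbd v hv).1, hvb.le], (hbd v hv).2⟩
      have h3 := integral_mono_ae hint (integrable_const vbar)
        ((ae_cube hsupp).mono fun v hv => (hbd v hv).2)
      rw [hUeq i]
      simpa using h3

lemma bdd_of_box {α : Fin n → ℝ} (hvb : 0 ≤ vbar) (hα : ∀ i, 0 ≤ α i)
    {S : Set (Fin n → ℝ)} (hS : ∀ U ∈ S, ∀ i, 0 ≤ U i ∧ U i ≤ vbar) :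
    BddAbove ((fun x => ∑ i, α i * x i) '' S) := by
  refine ⟨(∑ i, α i) * vbar, ?_⟩
  rintro x ⟨V, hV, rfl⟩
  rw [Finset.sum_mul]
  exact Finset.sum_le_sum fun i _ =>
    mul_le_mul_of_nonneg_left (hS V hV i).2 (hα i)

lemma vset_sum_le [∀ i, IsProbabilityMeasure (D i)] (hn : 0 < n) (hvb : 0 < vbar)
    (hsupp : ∀ i, D i (Set.Icc (0 : ℝ) vbar)ᶜ = 0)
    {α : Fin n → ℝ} (hα : ∀ i, 0 ≤ α i) :
    ∀ T : ℕ, 1 ≤ T → ∀ U ∈ Vset D vbar T,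
      ∑ i, α i * U i ≤ maxUstar D α -
        (maxUstar D α - supVal α (U0set D vbar)) / (T : ℝ) := by
  intro T
  induction T using Nat.strong_induction_on with
  | _ T ih =>
    rcases T with _ | _ | S
    · intro h; omega
    · intro _ U hU
      have hbdd : BddAbove ((fun x => ∑ i, α i * x i) '' U0set D vbar) :=
        bdd_of_box hvb.le hα fun V hV =>
          vset_box hvb hsupp 1 V (by rwa [Vset_one])
      have hb : ∑ i, α i * U i ≤ supVal α (U0set D vbar) :=
        le_csSup hbdd ⟨U, hU, rfl⟩
      push_cast
      linarith
    · intro _ U hU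
      obtain ⟨hpos, p, W, hp, hW, hUeq, hWmem, -⟩ := hU
      set c : ℝ := 1 / ((S:ℝ) + 2) with hc
      have hS2 : (0:ℝ) < (S:ℝ) + 2 := by positivity
      have hS1 : (0:ℝ) < (S:ℝ) + 1 := by positivity
      have hc0 : 0 ≤ c := by positivity
      have hc1 : c ≤ 1 := by
        rw [hc, div_le_one hS2]; linarith [show (0:ℝ) ≤ (S:ℝ) from Nat.cast_nonneg S]
      set K : ℝ := maxUstar D α - (maxUstar D α - supVal α (U0set D vbar)) / ((S:ℝ) + 1)
        with hK
      -- the per-coordinate integrands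
      set g : Fin n → (Fin n → ℝ) → ℝ :=
        fun i v => (1 - (1 - c)) * (v i * p v i) + (1 - c) * W v i with hg
      have hgbd : ∀ i, ∀ v ∈ cube n vbar, 0 ≤ g i v ∧ g i v ≤ vbar := by
        intro i v hv
        have h1 := hv i
        have h2 := simplex_coord (hp.2 v hv) i
        have h3 : 0 ≤ v i * p v i ∧ v i * p v i ≤ vbar := by
          refine ⟨mul_nonneg h1.1 h2.1, ?_⟩
          calc v i * p v i ≤ vbar * 1 := mul_le_mul h1.2 h2.2 h2.1 hvb.le
            _ = vbar := mul_one _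
        have h4 := vset_box hvb hsupp (S + 1) (W v) (hWmem v hv) i
        constructor
        · have e1 : (0:ℝ) ≤ (1 - (1 - c)) * (v i * p v i) :=
            mul_nonneg (by linarith) h3.1
          have e2 : (0:ℝ) ≤ (1 - c) * W v i := mul_nonneg (by linarith) h4.1
          simp only [hg]; linarith
        · have e1 : (1 - (1 - c)) * (v i * p v i) ≤ (1 - (1 - c)) * vbar :=
            mul_le_mul_of_nonneg_left h3.2 (by linarith)
          have e2 : (1 - c) * W v i ≤ (1 - c) * vbar :=
            mul_le_mul_of_nonneg_left h4.2 (by linarith)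
          simp only [hg]; nlinarith
      have hgmeas : ∀ i, Measurable (g i) := fun i =>
        (((measurable_pi_apply i).mul ((measurable_pi_apply i).comp hp.1)).const_mul _).add
          (((measurable_pi_apply i).comp hW).const_mul _)
      have hgint : ∀ i, Integrable (g i) (Measure.pi D) := fun i =>
        integ_bdd hsupp (hgmeas i) (M := vbar) fun v hv =>
          abs_le.mpr ⟨by linarith [(hgbd i v hv).1, hvb.le], (hgbd i v hv).2⟩
      have hsum : ∑ i, α i * U i = ∫ v, ∑ i, α i * g i v ∂(Measure.pi D) := by
        calc ∑ i, α i * U i = ∑ i, ∫ v, α i * g i v ∂(Measure.pi D) := by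
              refine Finset.sum_congr rfl fun i _ => ?_
              rw [hUeq i, integral_const_mul]
          _ = ∫ v, ∑ i, α i * g i v ∂(Measure.pi D) :=
              (integral_finset_sum _ fun i _ => (hgint i).const_mul _).symm
      have hZint : Integrable (Zmax α) (Measure.pi D) :=
        integ_bdd hsupp (zmax_meas hn α) (M := (∑ i, α i) * vbar) fun v hv =>
          abs_le.mpr ⟨by
            have := zmax_nonneg hn hα hv
            have h0 : (0:ℝ) ≤ (∑ i, α i) * vbar :=
              mul_nonneg (Finset.sum_nonneg fun i _ => hα i) hvb.le
            linarith, zmax_le hn hvb.le hα hv⟩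
      have hlhsint : Integrable (fun v => ∑ i, α i * g i v) (Measure.pi D) :=
        integrable_finset_sum _ fun i _ => (hgint i).const_mul _
      have hrhsint : Integrable (fun v => c * Zmax α v + (1 - c) * K) (Measure.pi D) :=
        (hZint.const_mul c).add (integrable_const _)
      have hptbd : ∀ᵐ v ∂(Measure.pi D),
          ∑ i, α i * g i v ≤ c * Zmax α v + (1 - c) * K := by
        refine (ae_cube hsupp).mono fun v hv => ?_
        have h1 : ∑ i, α i * g i v =
            c * (∑ i, α i * (v i * p v i)) + (1 - c) * (∑ i, α i * W v i) := by
          rw [Finset.mul_sum, Finset.mul_sum, ← Finset.sum_add_distrib]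
          refine Finset.sum_congr rfl fun i _ => ?_
          simp only [hg]; ring
        have h2 : ∑ i, α i * (v i * p v i) ≤ Zmax α v :=
          sum_le_zmax hn hα hv (hp.2 v hv)
        have h3 : ∑ i, α i * W v i ≤ K := by
          have := ih (S + 1) (by omega) (by omega) (W v) (hWmem v hv)
          rw [hK]
          push_cast at this
          linarith
        rw [h1]
        exact add_le_add (mul_le_mul_of_nonneg_left h2 hc0)
          (mul_le_mul_of_nonneg_left h3 (by linarith))
      have hint_le := integral_mono_ae hlhsint hrhsint hptbd
      have hrhs_eq : ∫ v, (c * Zmax α v + (1 - c) * K) ∂(Measure.pi D) =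
          c * maxUstar D α + (1 - c) * K := by
        rw [integral_add (hZint.const_mul c) (integrable_const _), integral_const_mul,
          integral_const]
        simp [maxUstar]
      have harith : c * maxUstar D α + (1 - c) * K = maxUstar D α -
          (maxUstar D α - supVal α (U0set D vbar)) / ((S:ℝ) + 2) := by
        rw [hK, hc]
        field_simp
        ring
      have hcast : ((S + 1 + 1 : ℕ) : ℝ) = (S:ℝ) + 2 := by push_cast; ring
      rw [hcast, hsum, ← harith, ← hrhs_eq]
      exact hint_le

end AuxNoFaster

/-- in the finite-horizon setting, the gap to the first-best allocation is at
least `C/T` when `𝒰₀` contains no `α`-optimal vector. -/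
theorem no_faster_than_one_over_T {n : ℕ} (hn : 2 ≤ n) (vbar : ℝ) (hv : 0 < vbar)
    (D : Fin n → Measure ℝ) [∀ i, IsProbabilityMeasure (D i)]
    (hsupp : ∀ i, D i (Set.Icc (0 : ℝ) vbar)ᶜ = 0)
    (α : Fin n → ℝ) (hα : ∀ i, 0 ≤ α i) (hα0 : α ≠ 0)
    (hnoopt : supVal α (U0set D vbar) < maxUstar D α) :
    ∃ C : ℝ, 0 < C ∧ ∀ T : ℕ, 1 ≤ T →
      C / (T : ℝ) ≤ maxUstar D α - supVal α (Vset D vbar T) := by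
  classical
  set C := maxUstar D α - supVal α (U0set D vbar) with hCdef
  have hC : 0 < C := sub_pos.mpr hnoopt
  have hn0 : 0 < n := by omega
  have hU0 : (fun _ : Fin n => (0:ℝ)) ∈ U0set D vbar := by
    refine ⟨fun _ _ => 0, ⟨measurable_const, fun v _ => ⟨fun i => le_refl 0, by simp⟩⟩,
      ?_, ?_⟩
    · intro i a _ b _
      simp [interimFn]
    · funext i; simp [realized]
  have hbdd : BddAbove ((fun x => ∑ i, α i * x i) '' U0set D vbar) :=
    bdd_of_box hv.le hα fun V hV => vset_box hv hsupp 1 V (by rwa [Vset_one])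
  have hsup0 : 0 ≤ supVal α (U0set D vbar) := by
    have h := le_csSup hbdd ⟨_, hU0, rfl⟩
    simpa [supVal] using h
  refine ⟨C, hC, fun T hT => ?_⟩
  have hT1 : (1:ℝ) ≤ (T:ℝ) := by exact_mod_cast hT
  have hsupV : supVal α (Vset D vbar T) ≤ maxUstar D α - C / (T:ℝ) := by
    refine Real.sSup_le ?_ ?_
    · rintro x ⟨U, hU, rfl⟩
      exact vset_sum_le hn0 hv hsupp hα T hT U hU
    · have h1 : C / (T:ℝ) ≤ C := div_le_self hC.le hT1
      linarith
  linarith
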